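/- arXiv:2306.06498 — 9 statements merged into one kernel-verified Lean document; each statement's English description precedes it below -/
import Mathlib

section
/- Let μ > 0, ω > 0, and T > 0. Define a = -e^{-μT}(cos(ωT) + (μ/ω) sin(ωT)). Then |a| < 1. -/
/-! Writing `c = μ / ω` and `x = ω T`, so that `c x = μ T`, the bracket is bounded by
`|cos x| + |c| |sin x| < 1 + |c x| ≤ exp |c x|`, using `|sin x| < |x|` for `x ≠ 0`.
The damping factor `exp (-μ T)` then cancels this bound exactly. -/

open Real

lemma abs_cos_add_mul_sin_lt_exp {c x : ℝ} (hc : c ≠ 0) (hx : x ≠ 0) :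
    |cos x + c * sin x| < exp |c * x| :=
  calc |cos x + c * sin x| ≤ |cos x| + |c * sin x| := abs_add_le _ _
    _ < 1 + |c * x| := by
      refine add_lt_add_of_le_of_lt (abs_cos_le_one x) ?_
      rw [abs_mul, abs_mul]
      exact mul_lt_mul_of_pos_left (abs_sin_lt_abs hx) (abs_pos.2 hc)
    _ ≤ exp |c * x| := by linarith [add_one_le_exp |c * x|]

theorem abs_a_lt_one_underdamped (μ ω T : ℝ) (hμ : 0 < μ) (hω : 0 < ω) (hT : 0 < T) :
    |-(Real.exp (-(μ * T)) * (Real.cos (ω * T) + (μ / ω) * Real.sin (ω * T)))| < 1 := by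
  have hcx : μ / ω * (ω * T) = μ * T := by field_simp
  have hbound := abs_cos_add_mul_sin_lt_exp (div_pos hμ hω).ne' (mul_pos hω hT).ne'
  rw [hcx, abs_of_pos (mul_pos hμ hT)] at hbound
  rw [abs_neg, abs_mul, abs_of_pos (exp_pos _)]
  calc exp (-(μ * T)) * |cos (ω * T) + μ / ω * sin (ω * T)|
      < exp (-(μ * T)) * exp (μ * T) := mul_lt_mul_of_pos_left hbound (exp_pos _)
    _ = 1 := by rw [← exp_add, neg_add_cancel, exp_zero]
end

section
/- Let μ > ω₀ > 0 and T > 0. Define a = -e^{-μT}(cosh(ω₀T) + (μ/ω₀) sinh(ω₀T)). Then |a| < 1. -/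
/-!
The quantity `-a` is the value at time `T` of `x(t) = e^{-μt} (cosh ω₀t + (μ/ω₀) sinh ω₀t)`.
It is positive, `x(0) = 1`, and `x'(t) = -e^{-μt} sinh(ω₀t) (μ² - ω₀²)/ω₀ < 0` for `t > 0`,
so `0 < x(T) < 1`.
-/

open Real Set

/-- The solution of `x'' + 2μx' + (μ² - ω²)x = 0` with `x 0 = 1`, `x' 0 = 0`. -/
noncomputable def overdampedResponse (μ ω t : ℝ) : ℝ :=
  exp (-(μ * t)) * (cosh (ω * t) + μ / ω * sinh (ω * t))

theorem overdampedResponse_zero (μ ω : ℝ) : overdampedResponse μ ω 0 = 1 := by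
  simp [overdampedResponse]

theorem overdampedResponse_pos {μ ω t : ℝ} (hμ : 0 ≤ μ) (hω : 0 < ω) (ht : 0 ≤ t) :
    0 < overdampedResponse μ ω t := by
  have hsinh : 0 ≤ sinh (ω * t) := sinh_nonneg_iff.2 (mul_nonneg hω.le ht)
  have hcosh : 0 < cosh (ω * t) := cosh_pos _
  unfold overdampedResponse
  positivity

theorem hasDerivAt_overdampedResponse {μ ω : ℝ} (hω : ω ≠ 0) (t : ℝ) :
    HasDerivAt (overdampedResponse μ ω)
      (-(exp (-(μ * t)) * sinh (ω * t) * ((μ ^ 2 - ω ^ 2) / ω))) t := by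
  have hexp : HasDerivAt (fun s => exp (-(μ * s))) (exp (-(μ * t)) * -μ) t := by
    simpa using ((hasDerivAt_id t).const_mul μ).neg.exp
  have hcosh : HasDerivAt (fun s => cosh (ω * s)) (sinh (ω * t) * ω) t := by
    simpa using ((hasDerivAt_id t).const_mul ω).cosh
  have hsinh : HasDerivAt (fun s => sinh (ω * s)) (cosh (ω * t) * ω) t := by
    simpa using ((hasDerivAt_id t).const_mul ω).sinh
  refine (hexp.mul (hcosh.add (hsinh.const_mul (μ / ω)))).congr_deriv ?_
  simp only [Pi.add_apply]
  field_simp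
  ring

theorem strictAntiOn_overdampedResponse {μ ω : ℝ} (hω : 0 < ω) (hωμ : ω < μ) :
    StrictAntiOn (overdampedResponse μ ω) (Ici 0) := by
  have hderiv := hasDerivAt_overdampedResponse (μ := μ) hω.ne'
  refine strictAntiOn_of_deriv_neg (convex_Ici 0)
    (fun t _ => (hderiv t).continuousAt.continuousWithinAt) fun t ht => ?_
  rw [interior_Ici, mem_Ioi] at ht
  have hsinh : 0 < sinh (ω * t) := sinh_pos_iff.2 (mul_pos hω ht)
  have hrate : 0 < (μ ^ 2 - ω ^ 2) / ω := div_pos (by nlinarith) hω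
  rw [(hderiv t).deriv, neg_neg_iff_pos]
  positivity

theorem abs_a_lt_one_overdamped (μ ω₀ T : ℝ) (hμω : ω₀ < μ) (hω : 0 < ω₀) (hT : 0 < T) :
    |-(Real.exp (-(μ * T)) * (Real.cosh (ω₀ * T) + (μ / ω₀) * Real.sinh (ω₀ * T)))| < 1 := by
  change |-overdampedResponse μ ω₀ T| < 1
  rw [abs_neg, abs_of_pos (overdampedResponse_pos (hω.trans hμω).le hω hT.le),
    ← overdampedResponse_zero μ ω₀]
  exact strictAntiOn_overdampedResponse hω hμω self_mem_Ici hT.le hT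
end

section
/- For all x > 0 and y > 1, y·sinh(x) − cosh(x) > −e^{-xy}. -/
open Real

/-!
Write `y sinh x - cosh x = (y - 1) sinh x - e^{-x}` and `e^{-xy} = e^{-x} e^{-x(y-1)}`.
By `e^{-t} ≥ 1 - t`, the term `-e^{-xy}` is at most `x (y - 1) e^{-x} - e^{-x}`, and
`x e^{-x} < x < sinh x` for `x > 0` makes this strictly smaller than `(y - 1) sinh x - e^{-x}`.
-/

lemma Real.mul_exp_neg_lt_sinh {x : ℝ} (hx : 0 < x) : x * exp (-x) < sinh x :=
  calc x * exp (-x) < x := mul_lt_of_lt_one_right hx (exp_lt_one_iff.mpr (neg_neg_of_pos hx))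
    _ < sinh x := self_lt_sinh_iff.mpr hx

lemma Real.mul_sinh_sub_cosh (x y : ℝ) :
    y * sinh x - cosh x = (y - 1) * sinh x - exp (-x) := by
  rw [← cosh_sub_sinh]
  ring

theorem sinh_cosh_exp_bound (x y : ℝ) (hx : 0 < x) (hy : 1 < y) :
    y * Real.sinh x - Real.cosh x > -Real.exp (-(x * y)) := by
  have hy' : 0 < y - 1 := sub_pos.mpr hy
  calc -exp (-(x * y)) = -(exp (-x) * exp (-(x * (y - 1)))) := by
        rw [← exp_add]; ring_nf
    _ ≤ -(exp (-x) * (1 - x * (y - 1))) := by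
        gcongr; linarith [add_one_le_exp (-(x * (y - 1)))]
    _ = (y - 1) * (x * exp (-x)) - exp (-x) := by ring
    _ < (y - 1) * sinh x - exp (-x) := by gcongr; exact mul_exp_neg_lt_sinh hx
    _ = y * sinh x - cosh x := (mul_sinh_sub_cosh x y).symm
end

section
/- For all φ ∈ [0, π) and y > 0, y · (sin φ / φ) − cos φ > −e^{-y}, where sin φ / φ is interpreted as 1 when φ = 0. -/
/-!
On `[0, π]` one has `cos φ ≤ sinc φ` and `sinc φ ≥ 0` (for `φ < π/2` this is `φ < tan φ`,
beyond `π/2` the cosine is nonpositive). Hence `y sinc φ - cos φ ≥ cos φ (y - 1) ≥ min 0 (y - 1)`,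
and `min 0 (y - 1) > -e^{-y}` is `e^{-y} > 1 - y`.
-/

open Real

namespace Real

lemma sinc_nonneg {x : ℝ} (hx0 : 0 ≤ x) (hxπ : x ≤ π) : 0 ≤ sinc x := by
  rw [sinc_apply]
  split_ifs
  · exact zero_le_one
  · exact div_nonneg (sin_nonneg_of_nonneg_of_le_pi hx0 hxπ) hx0

lemma cos_le_sinc {x : ℝ} (hx0 : 0 ≤ x) (hxπ : x ≤ π) : cos x ≤ sinc x := by
  rcases hx0.eq_or_lt with rfl | hx
  · simp
  rcases lt_or_ge x (π / 2) with hx2 | hx2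
  · have hcos : 0 < cos x := cos_pos_of_mem_Ioo ⟨by linarith [pi_pos], hx2⟩
    have htan : x < sin x / cos x := tan_eq_sin_div_cos x ▸ lt_tan hx hx2
    rw [sinc_of_ne_zero hx.ne', le_div_iff₀ hx]
    rw [lt_div_iff₀ hcos] at htan
    nlinarith
  · exact (cos_nonpos_of_pi_div_two_le_of_le hx2 (by linarith [pi_pos])).trans
      (sinc_nonneg hx.le hxπ)

end Real

lemma min_zero_sub_one_le_mul_sub {y s c : ℝ} (hy : 0 ≤ y) (hs : 0 ≤ s) (hcs : c ≤ s)
    (hc1 : c ≤ 1) : min 0 (y - 1) ≤ y * s - c := by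
  rcases le_or_gt c 0 with hc | hc
  · exact (min_le_left _ _).trans (by nlinarith)
  have hys : c * (y - 1) ≤ y * s - c := by nlinarith
  rcases le_or_gt 1 y with h1 | h1
  · exact (min_le_left _ _).trans (by nlinarith)
  · exact (min_le_right _ _).trans (by nlinarith)

lemma neg_exp_neg_lt_min_zero_sub_one {y : ℝ} (hy : y ≠ 0) : -exp (-y) < min 0 (y - 1) :=
  lt_min (neg_neg_of_pos (exp_pos _)) (by linarith [add_one_lt_exp (neg_ne_zero.mpr hy)])

theorem sinc_cos_exp_bound (φ y : ℝ) (hφ0 : 0 ≤ φ) (hφπ : φ < Real.pi) (hy : 0 < y) :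
    y * (if φ = 0 then 1 else Real.sin φ / φ) - Real.cos φ > -Real.exp (-y) := by
  rw [← sinc_apply]
  calc -exp (-y) < min 0 (y - 1) := neg_exp_neg_lt_min_zero_sub_one hy.ne'
    _ ≤ y * sinc φ - cos φ :=
      min_zero_sub_one_le_mul_sub hy.le (sinc_nonneg hφ0 hφπ.le) (cos_le_sinc hφ0 hφπ.le)
        (cos_le_one φ)
end

section
/- Let ν ≥ 1, and let a, b, c, d be real numbers. Let M be the (ν+1)×(ν+1) matrix with first row (a, b, b, ..., b), second row (c, d, d, ..., d), and for i = 3, ..., ν+1, the i-th row has a 1 in column i−1 and zeros elsewhere. Then the characteristic polynomial satisfies det(M − λI) = 0 if and only if ((a−1)d − bc)·(1 − λ^ν)/(1 − λ) + d − (a + d)λ^ν + λ^{ν+1} = 0 for λ ≠ 1, where (1 − λ^ν)/(1 − λ) denotes the geometric sum 1 + λ + ... + λ^{ν−1}. -/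
/-!
A kernel vector `v` of `M - λ • 1` satisfies `v (i - 1) = λ * v i` on every shift row, so it is
determined by `x = v 0` and `t = v ν`, namely `v i = λ ^ (ν - i) * t` for `i ≥ 1`. The first two rows
then reduce to the `2 × 2` system with matrix `!![a - λ, b * S; c, d * S - λ ^ ν]`, where
`S = 1 + λ + ⋯ + λ ^ (ν - 1)`, and `(λ - 1) * S = λ ^ ν - 1` turns its determinant into the stated
polynomial.
-/

open Matrix Finset

theorem Fin.eq_pow_mul_last_of_eq_mul_succ {M : Type*} [Monoid M] {n : ℕ} {w : Fin (n + 1) → M}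
    {r : M} (h : ∀ k : Fin n, w k.castSucc = r * w k.succ) (j : Fin (n + 1)) :
    w j = r ^ (n - j) * w (Fin.last n) := by
  induction j using Fin.reverseInduction with
  | last => simp
  | cast k ih =>
    rw [h k, ih, ← mul_assoc, ← pow_succ']
    congr 3
    simp only [Fin.val_succ, Fin.val_castSucc]
    omega

theorem Fin.sum_pow_sub_val {R : Type*} [Semiring R] (r : R) (n : ℕ) :
    ∑ j : Fin (n + 1), r ^ (n - j) = ∑ i ∈ range (n + 1), r ^ i := by
  rw [Fin.sum_univ_eq_sum_range (fun k => r ^ (n - k)), ← sum_range_reflect]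
  refine sum_congr rfl fun k hk => ?_
  rw [mem_range] at hk
  congr 1
  omega

section

variable {R : Type*} [CommRing R] (n : ℕ) (a b c d lam : R)

/-- The paper's `DM_ν` for `ν = n + 1`. -/
def shiftJacobian : Matrix (Fin (n + 2)) (Fin (n + 2)) R :=
  of fun i j => if (i : ℕ) = 0 then (if (j : ℕ) = 0 then a else b)
    else if (i : ℕ) = 1 then (if (j : ℕ) = 0 then c else d)
    else if (j : ℕ) + 1 = i then 1 else 0

def shiftJacobianReduced : Matrix (Fin 2) (Fin 2) R :=
  let S := ∑ i ∈ range (n + 1), lam ^ i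
  !![a - lam, b * S; c, d * S - lam ^ (n + 1)]

def geomExtend (p : Fin 2 → R) : Fin (n + 2) → R :=
  Fin.cons (p 0) fun j => lam ^ (n - j) * p 1

variable {n a b c d lam}

theorem shiftJacobian_mulVec_cons (x : R) (w : Fin (n + 1) → R) :
    shiftJacobian n a b c d *ᵥ Fin.cons x w =
      Fin.cons (a * x + b * ∑ j, w j) (Fin.cons (c * x + d * ∑ j, w j) fun k => w k.castSucc) := by
  funext i
  refine Fin.cases ?_ (Fin.cases ?_ fun k => ?_) i
  · simp [shiftJacobian, mulVec, dotProduct, Fin.sum_univ_succ (n := n + 1), mul_sum]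
  · simp [shiftJacobian, mulVec, dotProduct, Fin.sum_univ_succ (n := n + 1), mul_sum]
  · rw [mulVec, dotProduct, Fintype.sum_eq_single k.castSucc.succ]
    · simp [shiftJacobian]
    · intro j hj
      have : (j : ℕ) ≠ k + 1 := fun h => hj (Fin.ext (by simpa using h))
      simp [shiftJacobian, this]

theorem shiftJacobian_sub_smul_one_mulVec_cons (x : R) (w : Fin (n + 1) → R) :
    (shiftJacobian n a b c d - lam • 1) *ᵥ Fin.cons x w =
      Fin.cons ((a - lam) * x + b * ∑ j, w j)
        (Fin.cons (c * x + d * ∑ j, w j - lam * w 0) fun k => w k.castSucc - lam * w k.succ) := by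
  rw [sub_mulVec, smul_mulVec, one_mulVec, shiftJacobian_mulVec_cons]
  funext i
  refine Fin.cases ?_ (Fin.cases ?_ fun k => ?_) i
  · simp only [Fin.cons_zero, Pi.sub_apply, Pi.smul_apply, smul_eq_mul]
    ring
  · simp only [Fin.cons_succ, Fin.cons_zero, Pi.sub_apply, Pi.smul_apply, smul_eq_mul]
  · simp only [Fin.cons_succ, Pi.sub_apply, Pi.smul_apply, smul_eq_mul]

theorem shiftJacobian_sub_smul_one_mulVec_geomExtend (p : Fin 2 → R) :
    (shiftJacobian n a b c d - lam • 1) *ᵥ geomExtend n lam p =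
      Fin.cons ((shiftJacobianReduced n a b c d lam *ᵥ p) 0)
        (Fin.cons ((shiftJacobianReduced n a b c d lam *ᵥ p) 1) 0) := by
  rw [geomExtend, shiftJacobian_sub_smul_one_mulVec_cons, ← sum_mul, Fin.sum_pow_sub_val]
  funext i
  refine Fin.cases ?_ (Fin.cases ?_ fun k => ?_) i
  · simp only [Fin.cons_zero, shiftJacobianReduced, mulVec, dotProduct, Fin.sum_univ_two, of_apply,
      cons_val', cons_val_zero, cons_val_one, empty_val', cons_val_fin_one]
    ring
  · simp only [Fin.cons_succ, Fin.cons_zero, shiftJacobianReduced, mulVec, dotProduct, Fin.sum_univ_two,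
      of_apply, cons_val', cons_val_zero, cons_val_one, empty_val', cons_val_fin_one, Fin.val_zero, tsub_zero]
    ring
  · have hk : n - k = n - (k + 1) + 1 := by omega
    simp only [Fin.cons_succ, Fin.val_castSucc, Fin.val_succ, hk, pow_succ, Pi.zero_apply]
    ring

theorem geomExtend_eq_zero_iff {p : Fin 2 → R} : geomExtend n lam p = 0 ↔ p = 0 := by
  constructor
  · intro h
    ext i
    fin_cases i
    · simpa [geomExtend] using congrFun h 0
    · simpa [geomExtend] using congrFun h (Fin.last _)
  · rintro rfl
    funext i
    refine Fin.cases ?_ (fun j => ?_) i <;> simp [geomExtend]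

theorem eq_geomExtend_of_mulVec_eq_zero {v : Fin (n + 2) → R}
    (hv : (shiftJacobian n a b c d - lam • 1) *ᵥ v = 0) :
    v = geomExtend n lam ![v 0, v (Fin.last _)] := by
  rw [← Fin.cons_self_tail v, shiftJacobian_sub_smul_one_mulVec_cons] at hv
  have hshift (k : Fin n) : Fin.tail v k.castSucc = lam * Fin.tail v k.succ :=
    sub_eq_zero.mp (congrFun hv k.succ.succ)
  conv_lhs => rw [← Fin.cons_self_tail v]
  funext i
  refine Fin.cases rfl (fun j => ?_) i
  simpa [geomExtend, Fin.tail] using Fin.eq_pow_mul_last_of_eq_mul_succ hshift j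

theorem det_shiftJacobian_sub_smul_one_eq_zero_iff [IsDomain R] :
    (shiftJacobian n a b c d - lam • 1).det = 0 ↔ (shiftJacobianReduced n a b c d lam).det = 0 := by
  rw [← exists_mulVec_eq_zero_iff, ← exists_mulVec_eq_zero_iff]
  constructor
  · rintro ⟨v, hv, hMv⟩
    have hvp := eq_geomExtend_of_mulVec_eq_zero hMv
    refine ⟨![v 0, v (Fin.last _)], fun hp => hv ?_, ?_⟩
    · rw [hvp, hp, geomExtend_eq_zero_iff]
    rw [hvp, shiftJacobian_sub_smul_one_mulVec_geomExtend] at hMv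
    ext i
    fin_cases i
    · exact congrFun hMv 0
    · exact congrFun hMv 1
  · rintro ⟨p, hp, hNp⟩
    refine ⟨geomExtend n lam p, mt geomExtend_eq_zero_iff.mp hp, ?_⟩
    rw [shiftJacobian_sub_smul_one_mulVec_geomExtend, hNp]
    exact funext fun i => Fin.cases rfl (Fin.cases rfl fun _ => rfl) i

end

open Matrix Finset in
theorem char_eq_of_jacobian_general (ν : ℕ) (hν : 1 ≤ ν) (a b c d : ℝ)
    (M : Matrix (Fin (ν + 1)) (Fin (ν + 1)) ℝ)
    (hM : ∀ i j : Fin (ν + 1),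
      M i j = if (i : ℕ) = 0 then (if (j : ℕ) = 0 then a else b)
              else if (i : ℕ) = 1 then (if (j : ℕ) = 0 then c else d)
              else (if (j : ℕ) + 1 = (i : ℕ) then 1 else 0))
    (lam : ℝ) :
    (M - lam • (1 : Matrix (Fin (ν + 1)) (Fin (ν + 1)) ℝ)).det = 0 ↔
      ((a - 1) * d - b * c) * (∑ i ∈ range ν, lam ^ i)
        + d - (a + d) * lam ^ ν + lam ^ (ν + 1) = 0 := by
  obtain ⟨n, rfl⟩ := Nat.exists_eq_add_of_le' hν
  have hM' : M = shiftJacobian n a b c d := Matrix.ext hM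
  rw [hM', det_shiftJacobian_sub_smul_one_eq_zero_iff, shiftJacobianReduced, det_fin_two_of]
  have hgeom := geom_sum_mul lam (n + 1)
  constructor <;> intro h
  · linear_combination h + d * hgeom
  · linear_combination h - d * hgeom

open Matrix Finset in
theorem char_eq_of_jacobian (ν : ℕ) (hν : 1 ≤ ν) (a b c d : ℝ)
    (M : Matrix (Fin (ν + 1)) (Fin (ν + 1)) ℝ)
    (hM : ∀ i j : Fin (ν + 1),
      M i j = if (i : ℕ) = 0 then (if (j : ℕ) = 0 then a else b)
              else if (i : ℕ) = 1 then (if (j : ℕ) = 0 then c else d)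
              else (if (j : ℕ) + 1 = (i : ℕ) then 1 else 0))
    (lam : ℝ) (hlam : lam ≠ 1) :
    (M - lam • (1 : Matrix (Fin (ν + 1)) (Fin (ν + 1)) ℝ)).det = 0 ↔
      ((a - 1) * d - b * c) * (∑ i ∈ range ν, lam ^ i)
        + d - (a + d) * lam ^ ν + lam ^ (ν + 1) = 0 :=
  char_eq_of_jacobian_general ν hν a b c d M hM lam
end

section
/- Let ν ≥ 1 be an integer, let μ > 0, ω > 0, T > 0 and μT ≠ 0, and define a = −e^{-μT}(cos(ωT) + (μ/ω)sin(ωT)), d = −1 − e^{-μT}(cos(ωT) − (μ/ω)sin(ωT)), and A = 1 + 2cos(ωT)e^{-μT} + e^{-2μT}. Then λ = 1 is not a root of the characteristic equation 0 = A·(1 − λ^ν)/(1 − λ) + d − (a + d)λ^ν + λ^{ν+1}, i.e., A·ν + (1 − a) ≠ 0. -/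
/-!
Write `E = exp (-μT)`, `c = cos ωT`, `s = sin ωT`. The coefficient
`A = 1 + 2cE + E² = (1 - E)² + 2E(1 + c)` is positive because `E ≠ 1`, so `A ν > 0`.
The remaining term `1 - a = 1 + E (c + (μ/ω) s)` is nonnegative: `c ≥ -1` and
`|sin ωT| ≤ ωT` give `c + (μ/ω) s ≥ -(1 + μT)`, and `(1 + μT) exp (-μT) ≤ 1`.
-/

open Real

lemma one_add_two_mul_cos_mul_add_sq_pos (θ : ℝ) {r : ℝ} (hr₀ : 0 ≤ r) (hr₁ : r ≠ 1) :
    0 < 1 + 2 * cos θ * r + r ^ 2 := by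
  have hsq : 0 < (1 - r) ^ 2 := sq_pos_of_ne_zero (sub_ne_zero.mpr hr₁.symm)
  nlinarith [neg_one_le_cos θ]

lemma add_one_mul_exp_neg_le_one (x : ℝ) : (x + 1) * exp (-x) ≤ 1 :=
  calc (x + 1) * exp (-x) ≤ exp x * exp (-x) :=
        mul_le_mul_of_nonneg_right (add_one_le_exp x) (exp_pos _).le
    _ = 1 := by rw [← exp_add, add_neg_cancel, exp_zero]

lemma neg_mul_le_div_mul_sin {μ ω T : ℝ} (hμ : 0 ≤ μ) (hω : 0 < ω) (hT : 0 ≤ T) :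
    -(μ * T) ≤ μ / ω * sin (ω * T) := by
  have hsin : -(ω * T) ≤ sin (ω * T) := by
    simpa [abs_of_nonneg (mul_nonneg hω.le hT)] using
      neg_le_of_abs_le (abs_sin_le_abs (x := ω * T))
  calc -(μ * T) = μ / ω * -(ω * T) := by field_simp
    _ ≤ μ / ω * sin (ω * T) := mul_le_mul_of_nonneg_left hsin (div_nonneg hμ hω.le)

lemma one_add_exp_neg_mul_cos_add_div_mul_sin_nonneg {μ ω T : ℝ} (hμ : 0 ≤ μ) (hω : 0 < ω)
    (hT : 0 ≤ T) :
    0 ≤ 1 + exp (-(μ * T)) * (cos (ω * T) + μ / ω * sin (ω * T)) := by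
  have hbracket : -(μ * T + 1) ≤ cos (ω * T) + μ / ω * sin (ω * T) := by
    linarith [neg_one_le_cos (ω * T), neg_mul_le_div_mul_sin hμ hω hT]
  nlinarith [mul_le_mul_of_nonneg_left hbracket (exp_pos (-(μ * T))).le,
    add_one_mul_exp_neg_le_one (μ * T)]

theorem no_eigenvalue_one (ν : ℕ) (hν : 1 ≤ ν) (μ ω T : ℝ)
    (hμ : 0 < μ) (hω : 0 < ω) (hT : 0 < T) (hμT : μ * T ≠ 0) :
    (1 + 2 * Real.cos (ω * T) * Real.exp (-(μ * T)) + Real.exp (-(2 * μ * T))) * (ν : ℝ)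
      + (1 - (-(Real.exp (-(μ * T)) * (Real.cos (ω * T) + (μ / ω) * Real.sin (ω * T))))) ≠ 0 := by
  have hexp : exp (-(2 * μ * T)) = exp (-(μ * T)) ^ 2 := by
    rw [← exp_nat_mul]; ring_nf
  have hA : 0 < 1 + 2 * cos (ω * T) * exp (-(μ * T)) + exp (-(μ * T)) ^ 2 :=
    one_add_two_mul_cos_mul_add_sq_pos _ (exp_pos _).le (by simpa using hμT)
  have hAν := mul_pos hA (Nat.cast_pos.mpr hν)
  have hrest := one_add_exp_neg_mul_cos_add_div_mul_sin_nonneg hμ.le hω hT.le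
  rw [hexp]
  linarith
end

section
/- Let μ > 0, ω > 0 and T > 0 with ωT < π. Define d = −1 − e^{-μT}(cos(ωT) − (μ/ω)sin(ωT)). Then (1 + d) + e^{-2μT} > 0. -/
/-!
With `E = exp (-(μ T))` and `θ = ω T` the quantity factors as `E * (E + (μ / ω) sin θ - cos θ)`,
so it suffices that `cos θ < E + (μ / ω) sin θ`. For `θ ∈ (0, π)` one has `θ cos θ < sin θ`
(from `θ < tan θ` when `cos θ > 0`), which turns the claim into `(1 - μ T) cos θ < exp (-(μ T))`,
a consequence of `1 - a < exp (-a)`.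
-/

open Real

lemma Real.mul_cos_lt_sin {x : ℝ} (hx0 : 0 < x) (hxπ : x < π) : x * cos x < sin x := by
  have hsin : 0 < sin x := sin_pos_of_pos_of_lt_pi hx0 hxπ
  rcases le_or_gt (cos x) 0 with hcos | hcos
  · nlinarith
  · have hx : x < π / 2 := by
      by_contra! h
      exact hcos.not_ge (cos_nonpos_of_pi_div_two_le_of_le h (by linarith [pi_pos]))
    have htan : x < sin x / cos x := tan_eq_sin_div_cos x ▸ lt_tan hx0 hx
    exact (lt_div_iff₀ hcos).mp htan

lemma Real.one_sub_mul_lt_exp_neg {a c : ℝ} (ha : 0 < a) (hc0 : 0 ≤ c) (hc1 : c ≤ 1) :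
    (1 - a) * c < exp (-a) := by
  have hexp : 1 - a < exp (-a) := by linarith [add_one_lt_exp (neg_ne_zero.mpr ha.ne')]
  rcases le_or_gt 1 a with h | h
  · nlinarith [exp_pos (-a)]
  · nlinarith

lemma Real.lt_exp_neg_add {a b c : ℝ} (ha : 0 < a) (hb : 0 ≤ b) (hc : c ≤ 1) (hac : a * c < b) :
    c < exp (-a) + b := by
  rcases le_or_gt c 0 with hc0 | hc0
  · linarith [exp_pos (-a)]
  · linarith [one_sub_mul_lt_exp_neg ha hc0.le hc]

theorem no_pitchfork_underdamped (μ ω T : ℝ) (hμ : 0 < μ) (hω : 0 < ω) (hT : 0 < T)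
    (hωT : ω * T < Real.pi) :
    (1 + (-1 - Real.exp (-(μ * T)) * (Real.cos (ω * T) - (μ / ω) * Real.sin (ω * T))))
      + Real.exp (-(2 * μ * T)) > 0 := by
  set E := exp (-(μ * T))
  have hθ : 0 < ω * T := mul_pos hω hT
  have hk : 0 < μ / ω := div_pos hμ hω
  have hkθ : μ / ω * (ω * T) = μ * T := by field_simp
  have hkey : cos (ω * T) < E + μ / ω * sin (ω * T) := by
    refine lt_exp_neg_add (mul_pos hμ hT)
      (mul_nonneg hk.le (sin_pos_of_pos_of_lt_pi hθ hωT).le) (cos_le_one _) ?_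
    rw [← hkθ, mul_assoc]
    exact mul_lt_mul_of_pos_left (mul_cos_lt_sin hθ hωT) hk
  have hE2 : exp (-(2 * μ * T)) = E * E := by rw [← exp_add]; ring_nf
  have hfactor : (1 + (-1 - E * (cos (ω * T) - μ / ω * sin (ω * T)))) + exp (-(2 * μ * T))
      = E * (E + μ / ω * sin (ω * T) - cos (ω * T)) := by rw [hE2]; ring
  rw [hfactor]
  exact mul_pos (exp_pos _) (by linarith)
end

section
/- Let μ > ω₀ > 0 and T > 0. Define d = −1 − e^{-μT}(cosh(ω₀T) − (μ/ω₀)sinh(ω₀T)). Then (1 + d) + e^{-2μT} > 0. -/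
/-!
Dividing by `exp (-μT) > 0`, the claim becomes `cosh x < exp (-z) + (z / x) sinh x` for
`x = ω₀T < z = μT`. At `z = x` this is the identity `cosh x = exp (-x) + sinh x`; replacing
`exp (-z)` by its tangent line at `x` leaves the gap `(z - x) / x * (sinh x - x exp (-x))`,
which is positive because `sinh x ≥ x > x exp (-x)`.
-/

open Real

lemma exp_neg_mul_one_sub_le_exp_neg (x z : ℝ) : exp (-x) * (1 - (z - x)) ≤ exp (-z) := by
  calc exp (-x) * (1 - (z - x)) ≤ exp (-x) * exp (-(z - x)) := by
        gcongr; linarith [add_one_le_exp (-(z - x))]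
    _ = exp (-z) := by rw [← exp_add]; ring_nf

lemma cosh_lt_exp_neg_add_div_mul_sinh {x z : ℝ} (hx : 0 < x) (hxz : x < z) :
    cosh x < exp (-z) + z / x * sinh x := by
  have hcosh : cosh x = exp (-x) + sinh x := by rw [← cosh_sub_sinh]; ring
  have hsinh : x ≤ sinh x := self_le_sinh_iff.mpr hx.le
  have hexp : exp (-x) < 1 := exp_lt_one_iff.mpr (neg_lt_zero.mpr hx)
  have hgap : 0 < (z - x) / x * (sinh x - x * exp (-x)) := by
    apply mul_pos (div_pos (sub_pos.mpr hxz) hx)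
    nlinarith
  calc cosh x
      = exp (-x) * (1 - (z - x)) + z / x * sinh x - (z - x) / x * (sinh x - x * exp (-x)) := by
        rw [hcosh]; field_simp; ring
    _ < exp (-x) * (1 - (z - x)) + z / x * sinh x := by linarith
    _ ≤ exp (-z) + z / x * sinh x := by gcongr; exact exp_neg_mul_one_sub_le_exp_neg x z

theorem no_pitchfork_overdamped (μ ω₀ T : ℝ) (hμω : ω₀ < μ) (hω : 0 < ω₀) (hT : 0 < T) :
    (1 + (-1 - Real.exp (-(μ * T)) * (Real.cosh (ω₀ * T) - (μ / ω₀) * Real.sinh (ω₀ * T))))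
      + Real.exp (-(2 * μ * T)) > 0 := by
  have hratio : μ / ω₀ = μ * T / (ω₀ * T) := (mul_div_mul_right μ ω₀ hT.ne').symm
  have hgap := cosh_lt_exp_neg_add_div_mul_sinh (mul_pos hω hT)
    (mul_lt_mul_of_pos_right hμω hT)
  have hsq : exp (-(2 * μ * T)) = exp (-(μ * T)) * exp (-(μ * T)) := by
    rw [← exp_add]; ring_nf
  rw [hsq, hratio]
  linarith [mul_pos (exp_pos (-(μ * T))) (sub_pos.mpr hgap)]
end

section
/- For ν = 0, the characteristic equation 0 = ((a−1)d − bc)·(1−λ^ν)/(1−λ) + d − (a+d)λ^ν + λ^{ν+1} reduces to λ = a, and hence, since |a| < 1 whenever μ > 0, T > 0 and either (ω real positive) or (ω = iω₀ with μ > ω₀ > 0), the unique characteristic root of the linearized slowly oscillating map has modulus strictly less than 1. -/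
/-!
The characteristic equation is linear for `ν = 0`; the point is `|a| < 1`. Write `a = -e^{-μT} y`.

In the oscillatory case `|sin x| ≤ |x|` gives `|y| ≤ 1 + μT < e^{μT}`.

In the overdamped case `t ↦ e^{-μt} (cosh ω₀t + (μ/ω₀) sinh ω₀t)` has derivative
`e^{-μt} ((ω₀² - μ²)/ω₀) sinh ω₀t < 0` for `t > 0`, so it decreases strictly from its value `1`
at `t = 0`; it is also positive, hence `0 < -a < 1`.
-/

open Real Set

lemma abs_neg_exp_neg_mul_lt_one {s y : ℝ} (h : |y| < exp s) : |-(exp (-s) * y)| < 1 := by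
  rwa [abs_neg, abs_mul, abs_of_pos (exp_pos _), exp_neg, inv_mul_lt_iff₀ (exp_pos _), mul_one]

lemma abs_cos_add_div_mul_sin_le (μ ω t : ℝ) :
    |cos (ω * t) + μ / ω * sin (ω * t)| ≤ 1 + |μ * t| := by
  rcases eq_or_ne ω 0 with rfl | hω
  · simp only [div_zero, zero_mul, add_zero, cos_zero, abs_one]
    linarith [abs_nonneg (μ * t)]
  have hsin : |μ / ω| * |sin (ω * t)| ≤ |μ * t| :=
    calc |μ / ω| * |sin (ω * t)| ≤ |μ / ω| * |ω * t| :=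
        mul_le_mul_of_nonneg_left abs_sin_le_abs (abs_nonneg _)
      _ = |μ * t| := by rw [← abs_mul]; field_simp
  calc |cos (ω * t) + μ / ω * sin (ω * t)|
      ≤ |cos (ω * t)| + |μ / ω| * |sin (ω * t)| := by rw [← abs_mul]; exact abs_add_le _ _
    _ ≤ 1 + |μ * t| := add_le_add (abs_cos_le_one _) hsin

lemma abs_cos_add_div_mul_sin_lt_exp {μ ω t : ℝ} (hμt : 0 < μ * t) :
    |cos (ω * t) + μ / ω * sin (ω * t)| < exp (μ * t) :=
  calc |cos (ω * t) + μ / ω * sin (ω * t)| ≤ 1 + μ * t := by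
        simpa [abs_of_pos hμt] using abs_cos_add_div_mul_sin_le μ ω t
    _ < exp (μ * t) := by linarith [add_one_lt_exp hμt.ne']

section Overdamped

variable {μ ω₀ : ℝ}

lemma hasDerivAt_exp_neg_mul_cosh_add_div_mul_sinh (hω₀ : ω₀ ≠ 0) (t : ℝ) :
    HasDerivAt (fun t => exp (-(μ * t)) * (cosh (ω₀ * t) + μ / ω₀ * sinh (ω₀ * t)))
      (exp (-(μ * t)) * ((ω₀ ^ 2 - μ ^ 2) / ω₀ * sinh (ω₀ * t))) t := by
  have hlin : ∀ c : ℝ, HasDerivAt (fun t => c * t) c t := fun c => by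
    simpa using (hasDerivAt_id t).const_mul c
  have hexp : HasDerivAt (fun t => exp (-(μ * t))) (exp (-(μ * t)) * -μ) t :=
    ((hlin μ).neg).exp
  have hhyp : HasDerivAt (fun t => cosh (ω₀ * t) + μ / ω₀ * sinh (ω₀ * t))
      (sinh (ω₀ * t) * ω₀ + μ / ω₀ * (cosh (ω₀ * t) * ω₀)) t :=
    (hlin ω₀).cosh.add (((hlin ω₀).sinh).const_mul (μ / ω₀))
  refine (hexp.mul hhyp).congr_deriv ?_
  field_simp
  ring

lemma strictAntiOn_exp_neg_mul_cosh_add_div_mul_sinh (hω₀ : 0 < ω₀) (hω₀μ : ω₀ < μ) :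
    StrictAntiOn (fun t => exp (-(μ * t)) * (cosh (ω₀ * t) + μ / ω₀ * sinh (ω₀ * t))) (Ici 0) := by
  refine strictAntiOn_of_deriv_neg (convex_Ici 0) (Continuous.continuousOn (by fun_prop)) ?_
  intro t ht
  rw [interior_Ici, mem_Ioi] at ht
  rw [(hasDerivAt_exp_neg_mul_cosh_add_div_mul_sinh hω₀.ne' t).deriv]
  have hcoeff : (ω₀ ^ 2 - μ ^ 2) / ω₀ < 0 := div_neg_of_neg_of_pos (by nlinarith) hω₀
  exact mul_neg_of_pos_of_neg (exp_pos _)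
    (mul_neg_of_neg_of_pos hcoeff (sinh_pos_iff.2 (mul_pos hω₀ ht)))

lemma abs_neg_exp_neg_mul_cosh_add_div_mul_sinh_lt_one (hω₀ : 0 < ω₀) (hω₀μ : ω₀ < μ)
    {t : ℝ} (ht : 0 < t) :
    |-(exp (-(μ * t)) * (cosh (ω₀ * t) + μ / ω₀ * sinh (ω₀ * t)))| < 1 := by
  have hpos : 0 < cosh (ω₀ * t) + μ / ω₀ * sinh (ω₀ * t) :=
    add_pos (cosh_pos _) (mul_pos (div_pos (hω₀.trans hω₀μ) hω₀) (sinh_pos_iff.2 (mul_pos hω₀ ht)))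
  have hlt := strictAntiOn_exp_neg_mul_cosh_add_div_mul_sinh hω₀ hω₀μ self_mem_Ici ht.le ht
  simp only [mul_zero, neg_zero, exp_zero, cosh_zero, sinh_zero, add_zero, one_mul] at hlt
  rwa [abs_neg, abs_of_pos (mul_pos (exp_pos _) hpos)]

end Overdamped

open Finset in
theorem slowly_oscillating_stable (μ T a A d : ℝ) (hμ : 0 < μ) (hT : 0 < T)
    (ha : (∃ ω : ℝ, 0 < ω ∧
            a = -(Real.exp (-(μ * T)) * (Real.cos (ω * T) + (μ / ω) * Real.sin (ω * T))))
          ∨ (∃ ω₀ : ℝ, 0 < ω₀ ∧ ω₀ < μ ∧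
            a = -(Real.exp (-(μ * T)) * (Real.cosh (ω₀ * T) + (μ / ω₀) * Real.sinh (ω₀ * T))))) :
    (∀ lam : ℝ,
      A * (∑ i ∈ range 0, lam ^ i) + d - (a + d) * lam ^ (0 : ℕ) + lam ^ (0 + 1) = 0 ↔ lam = a)
    ∧ |a| < 1 := by
  refine ⟨fun lam => ?_, ?_⟩
  · simp only [range_zero, sum_empty, mul_zero, pow_zero, mul_one, pow_one, zero_add]
    constructor <;> intro h <;> linarith
  rcases ha with ⟨ω, -, rfl⟩ | ⟨ω₀, hω₀, hω₀μ, rfl⟩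
  · exact abs_neg_exp_neg_mul_lt_one (abs_cos_add_div_mul_sin_lt_exp (mul_pos hμ hT))
  · exact abs_neg_exp_neg_mul_cosh_add_div_mul_sinh_lt_one hω₀ hω₀μ hT
end
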